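/- arXiv:1401.0852 — 4 statements merged into one kernel-verified Lean document; each statement's English description precedes it below -/
import Mathlib

section
/- If B₁ ≠ B₂ are weighted adjacency matrices of DAGs admitting a common topological sort (equivalently, both P_π B₁ and P_π B₂ are strictly lower triangular for a common permutation π), then for any positive diagonal matrices Ω₁, Ω₂ we have Θ(B₁,Ω₁) ≠ Θ(B₂,Ω₂), where Θ(B,Ω) = (I − B)Ω^{−1}(I − B)ᵀ. -/
/-! Permuting rows and columns by `π` turns each `I - Bₖ` into a unit lower triangular `Lₖ`,
so `Θ(Bₖ, Ωₖ)` becomes an LDLᵀ factorization `Lₖ Dₖ Lₖᵀ`. Such a factorization is unique once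
`D₁` is invertible: for `M = L₂⁻¹ L₁` the identity `M D₁ Mᵀ = D₂` gives `M D₁ = D₂ (M⁻¹)ᵀ`,
a lower triangular matrix equal to an upper triangular one. Hence `M` is diagonal, and its unit
diagonal forces `M = 1`. -/

open Matrix

namespace Matrix

variable {m n R K : Type*}

theorem submatrix_mul_mul_transpose_equiv [Fintype m] [Fintype n] [CommSemiring R]
    (L D : Matrix n n R) (e : m ≃ n) :
    (L * D * Lᵀ).submatrix e e = L.submatrix e e * D.submatrix e e * (L.submatrix e e)ᵀ := by
  rw [← submatrix_mul_equiv _ _ _ e, ← submatrix_mul_equiv _ _ _ e, transpose_submatrix]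

variable [DecidableEq n] [LinearOrder n]

theorem isLowerTriangular_one_sub [Ring R] {A : Matrix n n R} (hA : ∀ i j, i ≤ j → A i j = 0) :
    (1 - A).IsLowerTriangular :=
  blockTriangular_one.sub fun i j hij => hA i j hij.le

theorem one_sub_apply_self [Ring R] {A : Matrix n n R} (hA : ∀ i j, i ≤ j → A i j = 0) (i : n) :
    (1 - A) i i = 1 := by
  simp [hA i i le_rfl]

variable [Fintype n]

theorem det_eq_one_of_isLowerTriangular [CommRing R] {L : Matrix n n R}
    (hL : L.IsLowerTriangular) (hdiag : ∀ i, L i i = 1) : L.det = 1 := by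
  simp [det_of_isLowerTriangular L hL, hdiag]

variable [CommRing K] [NoZeroDivisors K]

theorem isDiag_of_isLowerTriangular_of_mul_diagonal_mul_transpose_eq {M : Matrix n n K}
    {d₁ d₂ : n → K} (hM : M.IsLowerTriangular) (hMdet : IsUnit M.det) (hd₁ : ∀ i, d₁ i ≠ 0)
    (h : M * diagonal d₁ * Mᵀ = diagonal d₂) : M.IsDiag := by
  have := M.invertibleOfIsUnitDet hMdet
  have hMD : M * diagonal d₁ = diagonal d₂ * M⁻¹ᵀ := by
    rw [transpose_nonsing_inv]
    exact ((mul_inv_eq_iff_eq_mul_of_invertible _ _ _).2 h.symm).symm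
  intro i j hij
  rcases hij.lt_or_gt with hlt | hgt
  · exact hM hlt
  · have hij := congr_fun₂ hMD i j
    rw [mul_diagonal, diagonal_mul, transpose_apply, blockTriangular_inv_of_blockTriangular hM hgt,
      mul_zero] at hij
    exact (mul_eq_zero.1 hij).resolve_right (hd₁ j)

theorem eq_of_mul_diagonal_mul_transpose_eq {L₁ L₂ : Matrix n n K} {d₁ d₂ : n → K}
    (hL₁ : L₁.IsLowerTriangular) (hL₂ : L₂.IsLowerTriangular)
    (hL₁diag : ∀ i, L₁ i i = 1) (hL₂diag : ∀ i, L₂ i i = 1) (hd₁ : ∀ i, d₁ i ≠ 0)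
    (h : L₁ * diagonal d₁ * L₁ᵀ = L₂ * diagonal d₂ * L₂ᵀ) : L₁ = L₂ := by
  have := L₂.invertibleOfIsUnitDet (by simp [det_eq_one_of_isLowerTriangular hL₂ hL₂diag])
  set M := L₂⁻¹ * L₁ with hM
  have hMdiag : M.IsDiag := by
    refine isDiag_of_isLowerTriangular_of_mul_diagonal_mul_transpose_eq (d₂ := d₂)
      ((blockTriangular_inv_of_blockTriangular hL₂).mul hL₁) ?_ hd₁ ?_
    · simp [hM, det_eq_one_of_isLowerTriangular hL₁ hL₁diag,
        det_eq_one_of_isLowerTriangular hL₂ hL₂diag]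
    · calc M * diagonal d₁ * Mᵀ = L₂⁻¹ * (L₁ * diagonal d₁ * L₁ᵀ) * L₂⁻¹ᵀ := by
            simp only [hM, transpose_mul, Matrix.mul_assoc]
        _ = diagonal d₂ := by
            rw [h, transpose_nonsing_inv]
            simp only [Matrix.mul_assoc, mul_inv_of_invertible, Matrix.mul_one,
              inv_mul_cancel_left_of_invertible]
  have hL₁eq : L₁ = L₂ * diagonal M.diag := by
    rw [hMdiag.diagonal_diag, hM, mul_inv_cancel_left_of_invertible]
  have hMone : M.diag = 1 := funext fun i => by
    simpa [hL₁diag, hL₂diag] using (congr_fun₂ hL₁eq i i).symm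
  simp [hL₁eq, hMone]

theorem eq_of_one_sub_mul_diagonal_mul_transpose_eq {A₁ A₂ : Matrix n n K} {d₁ d₂ : n → K}
    (hA₁ : ∀ i j, i ≤ j → A₁ i j = 0) (hA₂ : ∀ i j, i ≤ j → A₂ i j = 0) (hd₁ : ∀ i, d₁ i ≠ 0)
    (h : (1 - A₁) * diagonal d₁ * (1 - A₁)ᵀ = (1 - A₂) * diagonal d₂ * (1 - A₂)ᵀ) : A₁ = A₂ :=
  sub_right_injective <| eq_of_mul_diagonal_mul_transpose_eq (isLowerTriangular_one_sub hA₁)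
    (isLowerTriangular_one_sub hA₂) (one_sub_apply_self hA₁) (one_sub_apply_self hA₂) hd₁ h

end Matrix

theorem theta_injective_common_sort_general {p : ℕ}
    (B₁ B₂ Ω₁ Ω₂ : Matrix (Fin p) (Fin p) ℝ) (π : Equiv.Perm (Fin p))
    (h1 : ∀ i j : Fin p, i ≤ j → B₁.submatrix π π i j = 0)
    (h2 : ∀ i j : Fin p, i ≤ j → B₂.submatrix π π i j = 0)
    (hΩ₁d : ∀ i j : Fin p, i ≠ j → Ω₁ i j = 0) (hΩ₁p : ∀ i, 0 < Ω₁ i i)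
    (hΩ₂d : ∀ i j : Fin p, i ≠ j → Ω₂ i j = 0)
    (hne : B₁ ≠ B₂) :
    (1 - B₁) * Ω₁⁻¹ * (1 - B₁)ᵀ ≠ (1 - B₂) * Ω₂⁻¹ * (1 - B₂)ᵀ := by
  intro heq
  have hΩ₁ : Ω₁ = diagonal Ω₁.diag := (IsDiag.diagonal_diag hΩ₁d).symm
  have hΩ₂ : Ω₂ = diagonal Ω₂.diag := (IsDiag.diagonal_diag hΩ₂d).symm
  rw [hΩ₁, hΩ₂, inv_diagonal, inv_diagonal] at heq
  have hd₁ : ∀ i, Ring.inverse Ω₁.diag (π i) ≠ 0 := fun i =>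
    (Pi.isUnit_iff.1 (Pi.isUnit_iff.2 fun j => (hΩ₁p j).ne'.isUnit).ringInverse (π i)).ne_zero
  have hπ := congrArg (submatrix · π π) heq
  simp only [submatrix_mul_mul_transpose_equiv, submatrix_sub, Pi.sub_apply, submatrix_one_equiv,
    submatrix_diagonal_equiv] at hπ
  have := eq_of_one_sub_mul_diagonal_mul_transpose_eq h1 h2 hd₁ hπ
  exact hne ((reindex π.symm π.symm).injective (by simpa [reindex_apply] using this))

/-- Distinct DAGs with a common topological sort give distinct precision matrices. -/
theorem theta_injective_common_sort {p : ℕ}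
    (B₁ B₂ Ω₁ Ω₂ : Matrix (Fin p) (Fin p) ℝ) (π : Equiv.Perm (Fin p))
    (h1 : ∀ i j : Fin p, i ≤ j → B₁.submatrix π π i j = 0)
    (h2 : ∀ i j : Fin p, i ≤ j → B₂.submatrix π π i j = 0)
    (hΩ₁d : ∀ i j : Fin p, i ≠ j → Ω₁ i j = 0) (hΩ₁p : ∀ i, 0 < Ω₁ i i)
    (hΩ₂d : ∀ i j : Fin p, i ≠ j → Ω₂ i j = 0) (hΩ₂p : ∀ i, 0 < Ω₂ i i)
    (hne : B₁ ≠ B₂) :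
    (1 - B₁) * Ω₁⁻¹ * (1 - B₁)ᵀ ≠ (1 - B₂) * Ω₂⁻¹ * (1 - B₂)ᵀ :=
  theta_injective_common_sort_general B₁ B₂ Ω₁ Ω₂ π h1 h2 hΩ₁d hΩ₁p hΩ₂d hne
end

section
/- Let Θ₀ be a symmetric positive definite matrix. The equivalence class ℰ(Θ₀) = {(B,Ω) : B a DAG adjacency matrix, Ω positive diagonal, (I−B)Ω^{−1}(I−B)ᵀ = Θ₀} equals the set {(P_{π^{−1}}L, P_{π^{−1}}D) : π a permutation, P_π Θ₀ = (I−L)D^{−1}(I−L)ᵀ with L strictly lower triangular and D positive diagonal}. In particular, ℰ(Θ₀) is a finite set with at most p! elements. -/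
/-!
If `π` is a topological order of the DAG `(B, Ω)`, conjugating by `P_π` turns
`Θ₀ = (I - B) Ω⁻¹ (I - B)ᵀ` into a factorization `P_π Θ₀ = (I - L) D⁻¹ (I - L)ᵀ` with `L`
strictly lower triangular and `D` positive diagonal, and conversely. Such a factorization is
unique: comparing column `j` of both sides, the columns to the left agree by induction and those
to the right do not contribute, which forces equality of `D_jj` and of column `j` of `L`. Hence
each of the `p!` permutations contributes at most one pair to the class.
-/

open Matrix

/-- The DAG equivalence class of a precision matrix Θ₀. -/
def dagClass (p : ℕ) (Θ₀ : Matrix (Fin p) (Fin p) ℝ) :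
    Set (Matrix (Fin p) (Fin p) ℝ × Matrix (Fin p) (Fin p) ℝ) :=
  { BΩ | (∃ π : Equiv.Perm (Fin p), ∀ i j : Fin p, i ≤ j → BΩ.1.submatrix π π i j = 0) ∧
      (∀ i j : Fin p, i ≠ j → BΩ.2 i j = 0) ∧ (∀ i, 0 < BΩ.2 i i) ∧
      (1 - BΩ.1) * BΩ.2⁻¹ * (1 - BΩ.1)ᵀ = Θ₀ }

namespace Matrix

variable {n K : Type*} [Fintype n] [DecidableEq n]

theorem mul_diagonal_mul_transpose_apply {R : Type*} [NonUnitalNonAssocSemiring R]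
    (M : Matrix n n R) (d : n → R) (i j : n) :
    (M * diagonal d * Mᵀ) i j = ∑ k, M i k * d k * M j k := by
  rw [mul_apply]
  simp only [mul_diagonal, transpose_apply]

section LowerTriangular

variable {R : Type*} [CommRing R] [IsDomain R] [LinearOrder n]

theorem eq_of_mul_diagonal_mul_transpose_eq_s4 {M₁ M₂ : Matrix n n R} {d₁ d₂ : n → R}
    (hM₁ : M₁.BlockTriangular OrderDual.toDual) (hM₂ : M₂.BlockTriangular OrderDual.toDual)
    (hM₁_diag : ∀ i, M₁ i i = 1) (hM₂_diag : ∀ i, M₂ i i = 1) (hd₂ : ∀ i, d₂ i ≠ 0)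
    (h : M₁ * diagonal d₁ * M₁ᵀ = M₂ * diagonal d₂ * M₂ᵀ) :
    M₁ = M₂ ∧ d₁ = d₂ := by
  suffices hcol : ∀ j, d₁ j = d₂ j ∧ ∀ i, M₁ i j = M₂ i j from
    ⟨ext fun i j => (hcol j).2 i, funext fun j => (hcol j).1⟩
  intro j
  induction j using WellFoundedLT.induction with
  | _ j ih =>
  have hcolumn : ∀ i, M₁ i j * d₁ j = M₂ i j * d₂ j := by
    intro i
    have hentry := congr_fun (congr_fun h i) j
    rw [mul_diagonal_mul_transpose_apply, mul_diagonal_mul_transpose_apply,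
      ← Finset.add_sum_erase _ _ (Finset.mem_univ j),
      ← Finset.add_sum_erase _ _ (Finset.mem_univ j), hM₁_diag, hM₂_diag] at hentry
    have hrest : ∑ k ∈ Finset.univ.erase j, M₁ i k * d₁ k * M₁ j k =
        ∑ k ∈ Finset.univ.erase j, M₂ i k * d₂ k * M₂ j k := by
      refine Finset.sum_congr rfl fun k hk => ?_
      rcases lt_or_gt_of_ne (Finset.ne_of_mem_erase hk) with hkj | hjk
      · rw [(ih k hkj).1, (ih k hkj).2 i, (ih k hkj).2 j]
      · rw [hM₁ hjk, hM₂ hjk, mul_zero, mul_zero]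
    simpa only [mul_one] using add_right_cancel (hentry.trans (congrArg _ hrest.symm))
  have hd : d₁ j = d₂ j := by simpa only [hM₁_diag, hM₂_diag, one_mul] using hcolumn j
  exact ⟨hd, fun i => mul_right_cancel₀ (hd₂ j) (hd ▸ hcolumn i)⟩

end LowerTriangular

variable [Field K]

theorem IsDiag.inv_eq_diagonal {D : Matrix n n K} (hD : D.IsDiag) (hD₀ : ∀ i, D i i ≠ 0) :
    D⁻¹ = diagonal fun i => (D i i)⁻¹ := by
  conv_lhs => rw [← hD.diagonal_diag]
  refine inv_eq_left_inv ?_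
  simp only [diagonal_mul_diagonal, diag_apply, inv_mul_cancel₀ (hD₀ _), diagonal_one]

/-- The precision matrix `Θ(B, Ω)` of the DAG model with edge weights `B` and noise
precisions `Ω`. -/
noncomputable def dagPrecision (B Ω : Matrix n n K) : Matrix n n K :=
  (1 - B) * Ω⁻¹ * (1 - B)ᵀ

theorem dagPrecision_submatrix {m : Type*} [Fintype m] [DecidableEq m] (B Ω : Matrix n n K)
    (e : m ≃ n) :
    (dagPrecision B Ω).submatrix e e = dagPrecision (B.submatrix e e) (Ω.submatrix e e) := by
  have hsub : (1 - B).submatrix e e = 1 - B.submatrix e e := by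
    rw [← submatrix_one_equiv e]; rfl
  rw [dagPrecision, dagPrecision, ← hsub, inv_submatrix_equiv, transpose_submatrix,
    submatrix_mul_equiv, submatrix_mul_equiv]

theorem eq_of_dagPrecision_eq [LinearOrder n] {L₁ L₂ D₁ D₂ : Matrix n n K}
    (hL₁ : ∀ i j, i ≤ j → L₁ i j = 0) (hL₂ : ∀ i j, i ≤ j → L₂ i j = 0)
    (hD₁ : D₁.IsDiag) (hD₂ : D₂.IsDiag) (hD₁₀ : ∀ i, D₁ i i ≠ 0) (hD₂₀ : ∀ i, D₂ i i ≠ 0)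
    (h : dagPrecision L₁ D₁ = dagPrecision L₂ D₂) :
    L₁ = L₂ ∧ D₁ = D₂ := by
  have hlower : ∀ {L : Matrix n n K}, (∀ i j, i ≤ j → L i j = 0) →
      (1 - L).BlockTriangular OrderDual.toDual := fun hL i j (hij : i < j) => by
    rw [sub_apply, one_apply_ne hij.ne, hL i j hij.le, sub_zero]
  have hunit : ∀ {L : Matrix n n K}, (∀ i j, i ≤ j → L i j = 0) → ∀ i, (1 - L) i i = 1 :=
    fun hL i => by rw [sub_apply, one_apply_eq, hL i i le_rfl, sub_zero]
  rw [dagPrecision, dagPrecision, hD₁.inv_eq_diagonal hD₁₀, hD₂.inv_eq_diagonal hD₂₀] at h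
  obtain ⟨hL, hD⟩ := eq_of_mul_diagonal_mul_transpose_eq_s4 (hlower hL₁) (hlower hL₂)
    (hunit hL₁) (hunit hL₂) (fun i => inv_ne_zero (hD₂₀ i)) h
  refine ⟨sub_right_injective hL, ?_⟩
  rw [← hD₁.diagonal_diag, ← hD₂.diagonal_diag]
  exact congrArg diagonal (funext fun i => inv_injective (congr_fun hD i))

end Matrix

theorem setOf_exists_finite_and_natCard_le {ι α : Type*} [Finite ι] {P : ι → α → Prop}
    (hP : ∀ i, {x | P i x}.Subsingleton) :
    {x | ∃ i, P i x}.Finite ∧ Nat.card {x | ∃ i, P i x} ≤ Nat.card ι := by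
  choose f hf using fun x : {x | ∃ i, P i x} => x.2
  have hf_inj : f.Injective := fun x y hxy => Subtype.ext (hP (f x) (hf x) (hxy ▸ hf y))
  exact ⟨Set.finite_coe_iff.mp (Finite.of_injective f hf_inj),
    Nat.card_le_card_of_injective f hf_inj⟩

section Cholesky

variable {p : ℕ}

/-- `BΩ = (P_{π⁻¹} L, P_{π⁻¹} D)` for the factors of `P_π Θ₀ = (I - L) D⁻¹ (I - L)ᵀ`. -/
def IsPermutedCholesky (Θ₀ : Matrix (Fin p) (Fin p) ℝ) (π : Equiv.Perm (Fin p))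
    (BΩ : Matrix (Fin p) (Fin p) ℝ × Matrix (Fin p) (Fin p) ℝ) : Prop :=
  ∃ L D : Matrix (Fin p) (Fin p) ℝ, (∀ i j : Fin p, i ≤ j → L i j = 0) ∧
    (∀ i j : Fin p, i ≠ j → D i j = 0) ∧ (∀ i, 0 < D i i) ∧
    Θ₀.submatrix π π = dagPrecision L D ∧
    BΩ.1 = L.submatrix π.symm π.symm ∧ BΩ.2 = D.submatrix π.symm π.symm

theorem mem_dagClass_iff {Θ₀ : Matrix (Fin p) (Fin p) ℝ}
    {BΩ : Matrix (Fin p) (Fin p) ℝ × Matrix (Fin p) (Fin p) ℝ} :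
    BΩ ∈ dagClass p Θ₀ ↔ ∃ π, IsPermutedCholesky Θ₀ π BΩ := by
  obtain ⟨B, Ω⟩ := BΩ
  constructor
  · rintro ⟨⟨π, hB⟩, hΩ, hΩ_pos, hΘ⟩
    refine ⟨π, B.submatrix π π, Ω.submatrix π π, hB, fun i j hij => hΩ _ _ (π.injective.ne hij),
      fun i => hΩ_pos _, ?_, by simp, by simp⟩
    rw [← hΘ]
    exact dagPrecision_submatrix B Ω π
  · rintro ⟨π, L, D, hL, hD, hD_pos, hΘ, rfl, rfl⟩
    refine ⟨⟨π, by simpa using hL⟩, fun i j hij => hD _ _ (π.symm.injective.ne hij),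
      fun i => hD_pos _, ?_⟩
    change dagPrecision _ _ = Θ₀
    rw [← dagPrecision_submatrix, ← hΘ, submatrix_submatrix, Equiv.self_comp_symm,
      submatrix_id_id]

theorem IsPermutedCholesky.unique {Θ₀ : Matrix (Fin p) (Fin p) ℝ} {π : Equiv.Perm (Fin p)}
    {x y : Matrix (Fin p) (Fin p) ℝ × Matrix (Fin p) (Fin p) ℝ}
    (hx : IsPermutedCholesky Θ₀ π x) (hy : IsPermutedCholesky Θ₀ π y) : x = y := by
  obtain ⟨L₁, D₁, hL₁, hD₁, hD₁_pos, hΘ₁, hx₁, hx₂⟩ := hx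
  obtain ⟨L₂, D₂, hL₂, hD₂, hD₂_pos, hΘ₂, hy₁, hy₂⟩ := hy
  obtain ⟨rfl, rfl⟩ := eq_of_dagPrecision_eq hL₁ hL₂ hD₁ hD₂ (fun i => (hD₁_pos i).ne')
    (fun i => (hD₂_pos i).ne') (hΘ₁.symm.trans hΘ₂)
  exact Prod.ext (hx₁.trans hy₁.symm) (hx₂.trans hy₂.symm)

end Cholesky

theorem dagClass_eq_cholesky_general {p : ℕ} (Θ₀ : Matrix (Fin p) (Fin p) ℝ) :
    dagClass p Θ₀ =
      { BΩ | ∃ (π : Equiv.Perm (Fin p)) (L D : Matrix (Fin p) (Fin p) ℝ),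
          (∀ i j : Fin p, i ≤ j → L i j = 0) ∧
          (∀ i j : Fin p, i ≠ j → D i j = 0) ∧ (∀ i, 0 < D i i) ∧
          Θ₀.submatrix π π = (1 - L) * D⁻¹ * (1 - L)ᵀ ∧
          BΩ.1 = L.submatrix π.symm π.symm ∧ BΩ.2 = D.submatrix π.symm π.symm } ∧
    (dagClass p Θ₀).Finite ∧ Nat.card (dagClass p Θ₀) ≤ Nat.factorial p := by
  have hclass : dagClass p Θ₀ = {BΩ | ∃ π, IsPermutedCholesky Θ₀ π BΩ} :=
    Set.ext fun _ => mem_dagClass_iff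
  obtain ⟨hfinite, hcard⟩ :=
    setOf_exists_finite_and_natCard_le (P := IsPermutedCholesky Θ₀) fun _ _ hx _ hy =>
      hx.unique hy
  refine ⟨hclass, hclass ▸ hfinite, ?_⟩
  rw [hclass]
  simpa only [Nat.card_eq_fintype_card, Fintype.card_perm, Fintype.card_fin] using hcard

/-- The equivalence class ℰ(Θ₀) is exactly the set of permuted Cholesky factorizations
of Θ₀, and in particular is finite with at most p! elements. -/
theorem dagClass_eq_cholesky {p : ℕ} (Θ₀ : Matrix (Fin p) (Fin p) ℝ)
    (hsym : Θ₀.IsSymm) (hpd : Θ₀.PosDef) :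
    dagClass p Θ₀ =
      { BΩ | ∃ (π : Equiv.Perm (Fin p)) (L D : Matrix (Fin p) (Fin p) ℝ),
          (∀ i j : Fin p, i ≤ j → L i j = 0) ∧
          (∀ i j : Fin p, i ≠ j → D i j = 0) ∧ (∀ i, 0 < D i i) ∧
          Θ₀.submatrix π π = (1 - L) * D⁻¹ * (1 - L)ᵀ ∧
          BΩ.1 = L.submatrix π.symm π.symm ∧ BΩ.2 = D.submatrix π.symm π.symm } ∧
    (dagClass p Θ₀).Finite ∧ Nat.card (dagClass p Θ₀) ≤ Nat.factorial p :=
  dagClass_eq_cholesky_general Θ₀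
end

section
/- Let λ > 0 and γ > 1. The unique global minimizer over β ∈ ℝ of Q¹(β) = ½(β − β̃)² + p_λ(|β|;γ), where p_λ(·;γ) is the MCP, is given by the MCP threshold function: S_γ(β̃, λ) = 0 if |β̃| ≤ λ; S_γ(β̃, λ) = sgn(β̃)(|β̃| − λ)/(1 − 1/γ) if λ < |β̃| ≤ λγ; and S_γ(β̃, λ) = β̃ if |β̃| > λγ. -/
/-!
On `[0, λγ]` the MCP is the concave quadratic `λt − t²/(2γ)`, and this quadratic lies below the
MCP everywhere. Replacing the penalty by it gives the surrogate `(1 − 1/γ)β²/2 − β̃β + λ|β| + β̃²/2`,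
which is `(1 − 1/γ)`-strongly convex for `γ > 1`; its minimizer is the rescaled soft threshold,
which is the MCP threshold whenever `|β̃| ≤ λγ`, and there the surrogate and `Q¹` agree.
If `|β̃| > λγ`, then `β = β̃` already attains the supremum `λ²γ/2` of the penalty with zero loss,
and any other `β` pays more in the quadratic loss than it saves in the penalty.
-/

/-- The minimax concave penalty (MCP). -/
noncomputable def mcp (l g t : ℝ) : ℝ :=
  if t < l * g then l * (t - t ^ 2 / (2 * l * g)) else l ^ 2 * g / 2

/-- The MCP threshold function. -/
noncomputable def mcpThresh (l g b : ℝ) : ℝ :=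
  if |b| ≤ l then 0
  else if |b| ≤ l * g then Real.sign b * (|b| - l) / (1 - 1 / g)
  else b

theorem Real.abs_sign_of_ne_zero {r : ℝ} (hr : r ≠ 0) : |Real.sign r| = 1 := by
  rcases hr.lt_or_gt with h | h <;> simp [Real.sign_of_neg, Real.sign_of_pos, h]

theorem Real.sign_mul_abs (r : ℝ) : Real.sign r * |r| = r := by
  rcases lt_trichotomy r 0 with h | rfl | h
  · rw [Real.sign_of_neg h, abs_of_neg h]
    ring
  · simp
  · rw [Real.sign_of_pos h, abs_of_pos h, one_mul]

theorem one_sub_one_div_pos {g : ℝ} (hg : 1 < g) : 0 < 1 - 1 / g := by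
  rw [sub_pos, div_lt_one (by linarith)]
  exact hg

/-- `hσ`, `hσs` say that `σ ∈ ∂|·|(s)`, so `hopt` says that `0` is a subgradient of
`β ↦ cβ²/2 − bβ + l|β|` at `s`. -/
theorem sq_sub_le_quadratic_add_abs_sub {c l b s σ : ℝ} (β : ℝ) (hl : 0 ≤ l) (hσ : |σ| ≤ 1)
    (hσs : σ * s = |s|) (hopt : c * s - b + l * σ = 0) :
    c * (β - s) ^ 2 / 2 ≤
      (c * β ^ 2 / 2 - b * β + l * |β|) - (c * s ^ 2 / 2 - b * s + l * |s|) := by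
  have hσβ : σ * β ≤ |β| := by
    calc σ * β ≤ |σ * β| := le_abs_self _
      _ = |σ| * |β| := abs_mul σ β
      _ ≤ 1 * |β| := mul_le_mul_of_nonneg_right hσ (abs_nonneg β)
      _ = |β| := one_mul _
  linear_combination -(β - s) * hopt - l * hσs + l * hσβ

section Mcp

variable {l g : ℝ}

theorem mcp_eq_of_le (hl : l ≠ 0) (hg : g ≠ 0) {t : ℝ} (ht : t ≤ l * g) :
    mcp l g t = l ^ 2 * g / 2 - (l * g - t) ^ 2 / (2 * g) := by
  unfold mcp
  split_ifs with h
  · field_simp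
    ring
  · rw [le_antisymm ht (not_lt.mp h)]
    field_simp
    ring

theorem mcp_eq_of_ge {t : ℝ} (ht : l * g ≤ t) : mcp l g t = l ^ 2 * g / 2 := by
  simp [mcp, not_lt.mpr ht]

theorem le_mcp (hl : l ≠ 0) (hg : 0 < g) (t : ℝ) :
    l ^ 2 * g / 2 - (l * g - t) ^ 2 / (2 * g) ≤ mcp l g t := by
  rcases le_total t (l * g) with ht | ht
  · exact (mcp_eq_of_le hl hg.ne' ht).ge
  · rw [mcp_eq_of_ge ht]
    have : 0 ≤ (l * g - t) ^ 2 / (2 * g) := by positivity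
    linarith

end Mcp

noncomputable def mcpObjective (l g b β : ℝ) : ℝ :=
  (β - b) ^ 2 / 2 + mcp l g |β|

section Objective

variable {l g b : ℝ}

theorem mcpObjective_eq_of_abs_le (hl : l ≠ 0) (hg : g ≠ 0) {β : ℝ} (hβ : |β| ≤ l * g) :
    mcpObjective l g b β = (1 - 1 / g) * β ^ 2 / 2 - b * β + l * |β| + b ^ 2 / 2 := by
  rw [mcpObjective, mcp_eq_of_le hl hg hβ]
  field_simp
  linear_combination -sq_abs β

theorem le_mcpObjective (hl : l ≠ 0) (hg : 0 < g) (β : ℝ) :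
    (1 - 1 / g) * β ^ 2 / 2 - b * β + l * |β| + b ^ 2 / 2 ≤ mcpObjective l g b β := by
  have hpenalty := le_mcp hl hg |β|
  have hsurrogate : l ^ 2 * g / 2 - (l * g - |β|) ^ 2 / (2 * g) + (β - b) ^ 2 / 2 =
      (1 - 1 / g) * β ^ 2 / 2 - b * β + l * |β| + b ^ 2 / 2 := by
    field_simp
    linear_combination -sq_abs β
  rw [mcpObjective]
  linarith

theorem abs_mcpThresh_le (hl : 0 < l) (hg : 1 < g) (hb : |b| ≤ l * g) :
    |mcpThresh l g b| ≤ l * g := by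
  unfold mcpThresh
  split_ifs with hbl
  · rw [abs_zero]
    positivity
  · have hb0 : b ≠ 0 := by rintro rfl; simp at hbl; linarith
    have hc : 0 < 1 - 1 / g := one_sub_one_div_pos hg
    rw [abs_div, abs_mul, Real.abs_sign_of_ne_zero hb0, one_mul, abs_of_pos hc,
      abs_of_pos (sub_pos.mpr (not_le.mp hbl)), div_le_iff₀ hc]
    have : l * g * (1 - 1 / g) = l * g - l := by field_simp
    linarith

theorem exists_subgradient_mcpThresh (hl : 0 < l) (hg : 1 < g) (hb : |b| ≤ l * g) :
    ∃ σ : ℝ, |σ| ≤ 1 ∧ σ * mcpThresh l g b = |mcpThresh l g b| ∧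
      (1 - 1 / g) * mcpThresh l g b - b + l * σ = 0 := by
  unfold mcpThresh
  split_ifs with hbl
  · refine ⟨b / l, ?_, by simp, ?_⟩
    · rwa [abs_div, abs_of_pos hl, div_le_one hl]
    · field_simp
      ring
  · have hb0 : b ≠ 0 := by rintro rfl; simp at hbl; linarith
    have hc : 0 < 1 - 1 / g := one_sub_one_div_pos hg
    have hσ := Real.abs_sign_of_ne_zero hb0
    have hσσ : Real.sign b * Real.sign b = 1 := by rw [← abs_mul_self, abs_mul, hσ, one_mul]
    refine ⟨Real.sign b, hσ.le, ?_, ?_⟩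
    · rw [abs_div, abs_mul, hσ, abs_of_pos hc, abs_of_pos (sub_pos.mpr (not_le.mp hbl)),
        ← mul_div_assoc, ← mul_assoc, hσσ, one_mul]
    · rw [mul_div_cancel₀ _ hc.ne']
      linear_combination Real.sign_mul_abs b

theorem mcpThresh_of_mul_lt_abs (hl : 0 < l) (hg : 1 < g) (hb : l * g < |b|) :
    mcpThresh l g b = b := by
  have hlb : ¬|b| ≤ l := by nlinarith
  simp [mcpThresh, hlb, not_le.mpr hb]

theorem mcpObjective_mcpThresh_lt_of_abs_le (hl : 0 < l) (hg : 1 < g) (hb : |b| ≤ l * g)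
    {β : ℝ} (hβ : β ≠ mcpThresh l g b) :
    mcpObjective l g b (mcpThresh l g b) < mcpObjective l g b β := by
  set s := mcpThresh l g b
  obtain ⟨σ, hσ, hσs, hopt⟩ := exists_subgradient_mcpThresh hl hg hb
  have hgrowth := sq_sub_le_quadratic_add_abs_sub β hl.le hσ hσs hopt
  have hpos : 0 < (1 - 1 / g) * (β - s) ^ 2 / 2 := by
    have := one_sub_one_div_pos hg
    have := sub_ne_zero.mpr hβ
    positivity
  calc mcpObjective l g b s = (1 - 1 / g) * s ^ 2 / 2 - b * s + l * |s| + b ^ 2 / 2 :=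
        mcpObjective_eq_of_abs_le hl.ne' (by linarith) (abs_mcpThresh_le hl hg hb)
    _ < (1 - 1 / g) * β ^ 2 / 2 - b * β + l * |β| + b ^ 2 / 2 := by linarith
    _ ≤ mcpObjective l g b β := le_mcpObjective hl.ne' (by linarith) β

theorem mcpObjective_self_lt_of_mul_lt_abs (hl : l ≠ 0) (hg : 1 ≤ g) (hb : l * g < |b|)
    {β : ℝ} (hβ : β ≠ b) : mcpObjective l g b b < mcpObjective l g b β := by
  have hloss : 0 < (β - b) ^ 2 / 2 := by
    have := sub_ne_zero.mpr hβ
    positivity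
  rw [mcpObjective, mcpObjective, mcp_eq_of_ge hb.le, sub_self]
  rcases le_total (l * g) |β| with hβg | hβg
  · rw [mcp_eq_of_ge hβg]
    linarith
  · rw [mcp_eq_of_le hl (by linarith) hβg]
    have hdist : l * g - |β| < |β - b| := by
      have := abs_sub_abs_le_abs_sub b β
      rw [abs_sub_comm] at this
      linarith
    have hsq : (l * g - |β|) ^ 2 < (β - b) ^ 2 := by
      rw [← sq_abs (β - b)]
      exact pow_lt_pow_left₀ hdist (by linarith) two_ne_zero
    have : (l * g - |β|) ^ 2 / (2 * g) ≤ (l * g - |β|) ^ 2 / 2 :=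
      div_le_div_of_nonneg_left (sq_nonneg _) two_pos (by linarith)
    linarith

end Objective

/-- For γ > 1, the MCP threshold function is the unique global minimizer of the
single-parameter penalized least squares objective Q¹(β) = ½(β − β̃)² + p_λ(|β|; γ). -/
theorem mcp_threshold_minimizer (l g b : ℝ) (hl : 0 < l) (hg : 1 < g) :
    ∀ β : ℝ, β ≠ mcpThresh l g b →
      (mcpThresh l g b - b) ^ 2 / 2 + mcp l g |mcpThresh l g b|
        < (β - b) ^ 2 / 2 + mcp l g |β| := by
  intro β hβ
  change mcpObjective l g b (mcpThresh l g b) < mcpObjective l g b β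
  rcases le_or_gt |b| (l * g) with hb | hb
  · exact mcpObjective_mcpThresh_lt_of_abs_le hl hg hb hβ
  · rw [mcpThresh_of_mul_lt_abs hl hg hb] at hβ ⊢
    exact mcpObjective_self_lt_of_mul_lt_abs hl.ne' hg.le hb hβ
end

section
/- The reparametrized negative log-likelihood L(Φ,R) = Σ_{j=1}^p [ −n log ρ_j + ½‖ρ_j x_j − X φ_j‖² ], viewed as a function of (Φ, R) where Φ ∈ ℝ^{p×p} with zero diagonal and R = diag(ρ₁,…,ρ_p) with ρ_j > 0, is a convex function on its (convex) domain. -/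
open Set

/-! Each summand is `-n log ρ_j`, a convex function of one coordinate, plus half a sum of squares of
linear functionals of `(Φ, R)`; convexity is preserved under precomposition with linear maps and under
nonnegative sums, and the domain is a linear subspace times an open orthant. -/

theorem ConvexOn.sum {𝕜 E β ι : Type*} [Semiring 𝕜] [PartialOrder 𝕜] [AddCommMonoid E]
    [AddCommMonoid β] [PartialOrder β] [IsOrderedAddMonoid β] [SMul 𝕜 E] [Module 𝕜 β]
    {s : Set E} (hs : Convex 𝕜 s) (t : Finset ι) {f : ι → E → β}
    (hf : ∀ i ∈ t, ConvexOn 𝕜 s (f i)) : ConvexOn 𝕜 s fun x => ∑ i ∈ t, f i x := by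
  classical
  induction t using Finset.induction_on with
  | empty => simpa only [Finset.sum_empty] using convexOn_const (0 : β) hs
  | insert a t ha ih =>
    simp only [Finset.sum_insert ha]
    exact (hf a (Finset.mem_insert_self a t)).add
      (ih fun i hi => hf i (Finset.mem_insert_of_mem hi))

lemma convexOn_sq_comp_linearMap {E : Type*} [AddCommGroup E] [Module ℝ E] (ℓ : E →ₗ[ℝ] ℝ) :
    ConvexOn ℝ univ fun x => ℓ x ^ 2 :=
  (even_two.convexOn_pow (𝕜 := ℝ)).comp_linearMap ℓ

lemma convexOn_const_mul_neg_log {c : ℝ} (hc : 0 ≤ c) :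
    ConvexOn ℝ (Ioi 0) fun x => -c * Real.log x := by
  simpa [neg_mul, ← mul_neg] using strictConcaveOn_log_Ioi.concaveOn.neg.smul hc

lemma convex_setOf_diag_eq_zero_and_pos {ι : Type*} :
    Convex ℝ {ΦR : Matrix ι ι ℝ × (ι → ℝ) | (∀ j, ΦR.1 j j = 0) ∧ ∀ j, 0 < ΦR.2 j} := by
  have h : {ΦR : Matrix ι ι ℝ × (ι → ℝ) | (∀ j, ΦR.1 j j = 0) ∧ ∀ j, 0 < ΦR.2 j} =
      (LinearMap.ker (Matrix.diagLinearMap ι ℝ ℝ) : Set (Matrix ι ι ℝ)) ×ˢ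
        Set.pi univ fun _ => Ioi 0 := by
    ext; simp [funext_iff]
  exact h ▸ (Submodule.convex _).prod (convex_pi fun _ _ => convex_Ioi 0)

/-- The `h`-th entry of `ρ_j x_j - X φ_j`, as a linear function of `(Φ, R)`. -/
def residualEntry {m ι : Type*} [Fintype ι] (X : Matrix m ι ℝ) (j : ι) (h : m) :
    Matrix ι ι ℝ × (ι → ℝ) →ₗ[ℝ] ℝ where
  toFun ΦR := ΦR.2 j * X h j - ∑ i, X h i * ΦR.1 i j
  map_add' _ _ := by
    simp only [Prod.fst_add, Prod.snd_add, Matrix.add_apply, Pi.add_apply, mul_add,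
      Finset.sum_add_distrib]
    ring
  map_smul' _ _ := by
    simp only [Prod.smul_fst, Prod.smul_snd, Matrix.smul_apply, Pi.smul_apply, smul_eq_mul,
      RingHom.id_apply, mul_sub, Finset.mul_sum, mul_left_comm, mul_assoc]

/-- The reparametrized negative log-likelihood
L(Φ,R) = Σⱼ [−n log ρⱼ + ½‖ρⱼ xⱼ − X φⱼ‖²]
is convex on its convex domain {Φ has zero diagonal, ρⱼ > 0}. -/
theorem reparam_loglik_convex {n p : ℕ} (X : Matrix (Fin n) (Fin p) ℝ) :
    Convex ℝ {ΦR : Matrix (Fin p) (Fin p) ℝ × (Fin p → ℝ) |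
        (∀ j, ΦR.1 j j = 0) ∧ ∀ j, 0 < ΦR.2 j} ∧
    ConvexOn ℝ {ΦR : Matrix (Fin p) (Fin p) ℝ × (Fin p → ℝ) |
        (∀ j, ΦR.1 j j = 0) ∧ ∀ j, 0 < ΦR.2 j}
      (fun ΦR => ∑ j : Fin p, (-(n : ℝ) * Real.log (ΦR.2 j)
        + (∑ h : Fin n, (ΦR.2 j * X h j - ∑ i : Fin p, X h i * ΦR.1 i j) ^ 2) / 2)) := by
  have hS := convex_setOf_diag_eq_zero_and_pos (ι := Fin p)
  refine ⟨hS, ConvexOn.sum hS _ fun j _ => ConvexOn.add ?_ ?_⟩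
  · exact ((convexOn_const_mul_neg_log n.cast_nonneg).comp_linearMap
      (LinearMap.proj j ∘ₗ LinearMap.snd ℝ _ _)).subset (fun _ hΦR => hΦR.2 j) hS
  · have hsq := (ConvexOn.sum convex_univ Finset.univ fun h _ =>
      convexOn_sq_comp_linearMap (residualEntry X j h)).smul (inv_nonneg.2 zero_le_two)
    simpa [div_eq_inv_mul, residualEntry] using hsq.subset (subset_univ _) hS
end
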